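/- arXiv:2201.11445 — 6 statements merged into one kernel-verified Lean document; each statement's English description precedes it below -/
import Mathlib

section
/- For A(r) = 1 - K r and C(r) = 1 (with K ≠ 0 and 1 - K r > 0), the function ψ(r) = √(-6/β) · log(1 - K r) (with β < 0) satisfies the equation 2(r³A'³ + rA' - 1) + A²(2 + 4r²A'' - 2rA' - β r²ψ'²) - 4A³ + 2A(2r²A'² + rA'(r²A'' + 2) + 2) = 0 for all r with 0 < r < 1/K. -/
/-!
Since `A = 1 - K r` is affine, `A'' = 0`, and `ψ' = √(-6/β) A'/A` gives `β ψ'² A² = -6 A'²`,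
which clears the only denominator: the field equation becomes a polynomial identity in `r`, `K`.
-/

open Filter Topology Real

theorem hasDerivAt_one_sub_mul (K x : ℝ) : HasDerivAt (fun x => 1 - K * x) (-K) x := by
  simpa using ((hasDerivAt_id x).const_mul K).const_sub 1

theorem deriv_one_sub_mul (K : ℝ) : deriv (fun x : ℝ => 1 - K * x) = fun _ => -K :=
  funext fun x => (hasDerivAt_one_sub_mul K x).deriv

theorem eventuallyEq_nhds_of_one_sub_mul_pos {K r : ℝ} {f g : ℝ → ℝ}
    (h : ∀ x, 1 - K * x > 0 → f x = g x) (hr : 1 - K * r > 0) : f =ᶠ[𝓝 r] g :=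
  eventually_of_mem ((isOpen_lt (g := fun x => 1 - K * x) continuous_const (by fun_prop)).mem_nhds
    hr) h

theorem mul_sq_deriv_mul_sq_eq {β K r : ℝ} (hβ : β < 0) {ψ : ℝ → ℝ}
    (hψ : ψ =ᶠ[𝓝 r] fun x => √(-6 / β) * log (1 - K * x)) (hr : 1 - K * r > 0) :
    β * deriv ψ r ^ 2 * (1 - K * r) ^ 2 = -6 * K ^ 2 := by
  have hψ' : deriv ψ r = √(-6 / β) * (-K / (1 - K * r)) := by
    rw [hψ.deriv_eq]
    exact (((hasDerivAt_one_sub_mul K r).log hr.ne').const_mul _).deriv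
  have hc : √(-6 / β) ^ 2 = -6 / β := sq_sqrt (div_nonneg_of_nonpos (by norm_num) hβ.le)
  rw [hψ', mul_pow, hc]
  field_simp [hβ.ne]

theorem stmt_0_general (K β : ℝ) (hβ : β < 0)
    (A ψ : ℝ → ℝ)
    (hA : ∀ r, A r = 1 - K * r)
    (hψ : ∀ r, 1 - K * r > 0 → ψ r = Real.sqrt (-6 / β) * Real.log (1 - K * r)) :
    ∀ r : ℝ, 0 < r → r < 1 / K → 1 - K * r > 0 →
      2 * (r ^ 3 * (deriv A r) ^ 3 + r * deriv A r - 1)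
        + (A r) ^ 2 * (2 + 4 * r ^ 2 * deriv (deriv A) r - 2 * r * deriv A r
            - β * r ^ 2 * (deriv ψ r) ^ 2)
        - 4 * (A r) ^ 3
        + 2 * (A r) * (2 * r ^ 2 * (deriv A r) ^ 2
            + r * deriv A r * (r ^ 2 * deriv (deriv A) r + 2) + 2) = 0 := by
  intro r _ _ hr
  obtain rfl : A = fun x => 1 - K * x := funext hA
  have hψ' := mul_sq_deriv_mul_sq_eq hβ (eventuallyEq_nhds_of_one_sub_mul_pos hψ hr) hr
  simp only [deriv_one_sub_mul, deriv_const]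
  linear_combination (-r ^ 2) * hψ'

/-- Field equation check for the exact solution A = 1 - K r, ψ = √(-6/β) log(1-Kr),
with C = 1, in boundary-coupled scalar-torsion gravity (real tetrad). -/
theorem stmt_0 (K β : ℝ) (hK : K ≠ 0) (hβ : β < 0)
    (A ψ : ℝ → ℝ)
    (hA : ∀ r, A r = 1 - K * r)
    (hψ : ∀ r, 1 - K * r > 0 → ψ r = Real.sqrt (-6 / β) * Real.log (1 - K * r)) :
    ∀ r : ℝ, 0 < r → r < 1 / K → 1 - K * r > 0 →
      2 * (r ^ 3 * (deriv A r) ^ 3 + r * deriv A r - 1)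
        + (A r) ^ 2 * (2 + 4 * r ^ 2 * deriv (deriv A) r - 2 * r * deriv A r
            - β * r ^ 2 * (deriv ψ r) ^ 2)
        - 4 * (A r) ^ 3
        + 2 * (A r) * (2 * r ^ 2 * (deriv A r) ^ 2
            + r * deriv A r * (r ^ 2 * deriv (deriv A) r + 2) + 2) = 0 :=
  stmt_0_general K β hβ A ψ hA hψ
end

section
/- For the Schwarzschild metric functions A(r)² = 1 − 2M/r and C(r) = 1, the torsion scalar and boundary term of the complex tetrad satisfy T₂(r) = 4/r² and B₂(r) = 4/r² for all r > 2M > 0, where T₂ = 2(2rAA'+A²+C²)/(r²C²) and B₂ = 2(r²CA'² + rA(C(rA''+6A') − rA'C') + 2A²(C−rC'))/(r²C³). -/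
/-!
Where `1 - 2M/r > 0` (guaranteed by `r > 2M > 0`) the lapse `A = √(1 - 2M/r)` is smooth with
`A' = M / (r² A)`. This formula holds on a neighbourhood of `r`, so `A''` is obtained by
differentiating the quotient. Substituting `A'`, `A''`, `A² = 1 - 2M/r` and `C = 1`, the terms
in `M` cancel and both expressions reduce to `4 / r²`.
-/

open Filter Topology

noncomputable section

def torsionScalar (A C : ℝ → ℝ) (r : ℝ) : ℝ :=
  2 * (2 * r * A r * deriv A r + (A r) ^ 2 + (C r) ^ 2) / (r ^ 2 * (C r) ^ 2)

def boundaryTerm (A C : ℝ → ℝ) (r : ℝ) : ℝ :=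
  2 * (r ^ 2 * C r * (deriv A r) ^ 2
      + r * A r * (C r * (r * deriv (deriv A) r + 6 * deriv A r)
        - r * deriv A r * deriv C r)
      + 2 * (A r) ^ 2 * (C r - r * deriv C r)) / (r ^ 2 * (C r) ^ 3)

def schwarzschildLapse (M r : ℝ) : ℝ := √(1 - 2 * M / r)

namespace schwarzschildLapse

variable {M r : ℝ}

lemma sq_eq (hf : 0 < 1 - 2 * M / r) : schwarzschildLapse M r ^ 2 = 1 - 2 * M / r :=
  Real.sq_sqrt hf.le

lemma pos (hf : 0 < 1 - 2 * M / r) : 0 < schwarzschildLapse M r :=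
  Real.sqrt_pos.mpr hf

lemma hasDerivAt (hr : r ≠ 0) (hf : 0 < 1 - 2 * M / r) :
    HasDerivAt (schwarzschildLapse M) (M / (r ^ 2 * schwarzschildLapse M r)) r := by
  have hinner : HasDerivAt (fun y : ℝ => 1 - 2 * M / y) (2 * M / r ^ 2) r := by
    simpa [div_eq_mul_inv] using ((hasDerivAt_inv hr).const_mul (2 * M)).const_sub 1
  refine ((Real.hasDerivAt_sqrt hf.ne').comp r hinner).congr_deriv ?_
  have := pos hf
  unfold schwarzschildLapse at *
  field_simp

lemma eventually_pos_radicand (hr : r ≠ 0) (hf : 0 < 1 - 2 * M / r) :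
    ∀ᶠ y in 𝓝 r, y ≠ 0 ∧ 0 < 1 - 2 * M / y := by
  have hcont : ContinuousAt (fun y : ℝ => 1 - 2 * M / y) r := by fun_prop (disch := exact hr)
  exact (eventually_ne_nhds hr).and (continuousAt_const.eventually_lt hcont hf)

lemma deriv_eq (hr : r ≠ 0) (hf : 0 < 1 - 2 * M / r) :
    deriv (schwarzschildLapse M) r = M / (r ^ 2 * schwarzschildLapse M r) :=
  (hasDerivAt hr hf).deriv

lemma deriv_deriv_eq (hr : r ≠ 0) (hf : 0 < 1 - 2 * M / r) :
    deriv (deriv (schwarzschildLapse M)) r =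
      -(M * (2 * r * schwarzschildLapse M r + r ^ 2 * deriv (schwarzschildLapse M) r))
        / (r ^ 2 * schwarzschildLapse M r) ^ 2 := by
  have hderiv : deriv (schwarzschildLapse M) =ᶠ[𝓝 r]
      fun y => M * (y ^ 2 * schwarzschildLapse M y)⁻¹ := by
    filter_upwards [eventually_pos_radicand hr hf] with y ⟨hy, hfy⟩
    rw [deriv_eq hy hfy, div_eq_mul_inv]
  have hden : HasDerivAt (fun y => y ^ 2 * schwarzschildLapse M y)
      (2 * r * schwarzschildLapse M r + r ^ 2 * deriv (schwarzschildLapse M) r) r := by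
    refine ((hasDerivAt_pow 2 r).mul (hasDerivAt hr hf)).congr_deriv ?_
    rw [deriv_eq hr hf]
    push_cast
    ring
  have hden_ne : r ^ 2 * schwarzschildLapse M r ≠ 0 := by have := pos hf; positivity
  refine hderiv.deriv_eq.trans (((hden.inv hden_ne).const_mul M).deriv.trans ?_)
  ring

end schwarzschildLapse

open schwarzschildLapse in
lemma torsionScalar_schwarzschild {M r : ℝ} (hr : r ≠ 0) (hf : 0 < 1 - 2 * M / r) :
    torsionScalar (schwarzschildLapse M) (fun _ => 1) r = 4 / r ^ 2 := by
  have hA := pos hf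
  unfold torsionScalar
  rw [deriv_eq hr hf, sq_eq hf]
  field_simp
  ring

open schwarzschildLapse in
lemma boundaryTerm_schwarzschild {M r : ℝ} (hr : r ≠ 0) (hf : 0 < 1 - 2 * M / r) :
    boundaryTerm (schwarzschildLapse M) (fun _ => 1) r = 4 / r ^ 2 := by
  have hA := pos hf
  unfold boundaryTerm
  rw [deriv_deriv_eq hr hf, deriv_const, deriv_eq hr hf, sq_eq hf]
  field_simp
  ring

end

/-- For the Schwarzschild metric (A² = 1 - 2M/r, C = 1), the torsion scalar and
boundary term of the complex tetrad both equal 4/r² for r > 2M > 0. -/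
theorem stmt_3 (M : ℝ) (hM : 0 < M) (A C : ℝ → ℝ)
    (hA : ∀ r, A r = Real.sqrt (1 - 2 * M / r))
    (hC : ∀ r, C r = 1) :
    ∀ r : ℝ, r > 2 * M →
      (2 * (2 * r * A r * deriv A r + (A r) ^ 2 + (C r) ^ 2) / (r ^ 2 * (C r) ^ 2)
        = 4 / r ^ 2)
      ∧
      (2 * (r ^ 2 * C r * (deriv A r) ^ 2
          + r * A r * (C r * (r * deriv (deriv A) r + 6 * deriv A r)
            - r * deriv A r * deriv C r)
          + 2 * (A r) ^ 2 * (C r - r * deriv C r)) / (r ^ 2 * (C r) ^ 3)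
        = 4 / r ^ 2) := by
  obtain rfl : A = schwarzschildLapse M := funext hA
  obtain rfl : C = fun _ => 1 := funext hC
  intro r hr
  have hr0 : 0 < r := by linarith
  have hf : 0 < 1 - 2 * M / r := by rwa [sub_pos, div_lt_one hr0]
  exact ⟨torsionScalar_schwarzschild hr0.ne' hf, boundaryTerm_schwarzschild hr0.ne' hf⟩
end

section
/- For A(r)² = 1/(2p+1) − 2M r^{−2p−1} (with p ≠ −1/2), C(r) = 1, ψ(r) = ψ₀ r^p with p ≠ 0, 𝒜(ψ) = −(1/4)pβψ², and 𝒱 = 0, the rr field equation for the complex tetrad holds: 𝒜(ψ)(−2rAA' − A² + C²)/(r²A²) + (1/2)βψ'² = 0, where here the boundary-coupling term is absent (𝒞̃' = 0). -/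
/-- The rr field equation (complex tetrad, torsion-scalar coupling only, V = 0)
holds for A² = 1/(2p+1) - 2M r^(-2p-1), C = 1, ψ = ψ₀ r^p, 𝒜(ψ) = -(1/4)pβψ². -/
theorem stmt_6 (p β M ψ₀ : ℝ) (hp : p ≠ -1/2) (hp0 : p ≠ 0) (hψ₀ : ψ₀ ≠ 0)
    (A ψ : ℝ → ℝ) (𝒜 : ℝ → ℝ)
    (hA : ∀ r > (0:ℝ), A r = Real.sqrt (1 / (2 * p + 1) - 2 * M * r ^ (-2 * p - 1)))
    (hψ : ∀ r > (0:ℝ), ψ r = ψ₀ * r ^ p)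
    (h𝒜 : ∀ s, 𝒜 s = -(1/4) * p * β * s ^ 2) :
    ∀ r > (0:ℝ), 0 < (A r) →
      𝒜 (ψ r) * (-(2 * r * A r * deriv A r) - (A r) ^ 2 + 1) / (r ^ 2 * (A r) ^ 2)
        + (1/2) * β * (deriv ψ r) ^ 2 = 0 := by
  intro r hr hAr
  have hr0 : r ≠ 0 := ne_of_gt hr
  have h2p : 2 * p + 1 ≠ 0 := by
    intro h; apply hp; linarith
  set f : ℝ → ℝ := fun x => 1 / (2 * p + 1) - 2 * M * x ^ (-2 * p - 1) with hf
  -- f r > 0 since A r = sqrt (f r) > 0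
  have hAeq : A r = Real.sqrt (f r) := hA r hr
  have hfpos : 0 < f r := Real.sqrt_pos.mp (hAeq ▸ hAr)
  have hA2 : (A r) ^ 2 = f r := by
    rw [hAeq, Real.sq_sqrt hfpos.le]
  have hAne : A r ≠ 0 := ne_of_gt hAr
  -- derivative of f
  have hfd : HasDerivAt f (-(2 * M * ((-2 * p - 1) * r ^ (-2 * p - 1 - 1)))) r := by
    have h1 : HasDerivAt (fun x : ℝ => x ^ (-2 * p - 1))
        ((-2 * p - 1) * r ^ (-2 * p - 1 - 1)) r :=
      Real.hasDerivAt_rpow_const (Or.inl hr0)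
    exact (h1.const_mul (2 * M)).const_sub (1 / (2 * p + 1))
  -- derivative of A
  have hAd : HasDerivAt (fun x => Real.sqrt (f x))
      (-(2 * M * ((-2 * p - 1) * r ^ (-2 * p - 1 - 1))) / (2 * Real.sqrt (f r))) r :=
    hfd.sqrt (ne_of_gt hfpos)
  have hev : A =ᶠ[nhds r] fun x => Real.sqrt (f x) := by
    filter_upwards [Ioi_mem_nhds hr] with x hx
    exact hA x hx
  have hdA : deriv A r
      = -(2 * M * ((-2 * p - 1) * r ^ (-2 * p - 1 - 1))) / (2 * A r) := by
    rw [hev.deriv_eq, hAd.deriv, hAeq]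
  -- derivative of ψ
  have hψd : HasDerivAt (fun x : ℝ => ψ₀ * x ^ p) (ψ₀ * (p * r ^ (p - 1))) r :=
    (Real.hasDerivAt_rpow_const (Or.inl hr0)).const_mul ψ₀
  have hevψ : ψ =ᶠ[nhds r] fun x : ℝ => ψ₀ * x ^ p := by
    filter_upwards [Ioi_mem_nhds hr] with x hx
    exact hψ x hx
  have hdψ : deriv ψ r = ψ₀ * (p * r ^ (p - 1)) := by
    rw [hevψ.deriv_eq, hψd.deriv]
  -- rpow relations
  have e1 : r ^ (-2 * p - 1 - 1) * r = r ^ (-2 * p - 1) := by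
    rw [← Real.rpow_add_one hr0, show -2 * p - 1 - 1 + 1 = -2 * p - 1 by ring]
  have e2 : r ^ (p - 1) * r = r ^ p := by
    rw [← Real.rpow_add_one hr0, sub_add_cancel]
  -- substitute everything
  rw [h𝒜, hψ r hr, hdA, hdψ]
  set u := r ^ (-2 * p - 1 - 1) with hu
  set v := r ^ p with hv
  set w := r ^ (p - 1) with hw
  set a := A r with ha
  have hfr : f r = 1 / (2 * p + 1) - 2 * M * (u * r) := by
    rw [hf]; simp only [← e1]
  have ha2 : (2 * p + 1) * a ^ 2 = 1 - 2 * M * (u * r) * (2 * p + 1) := by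
    rw [hA2, hfr]; field_simp
  have hc : 2 * r * a * (-(2 * M * ((-2 * p - 1) * u)) / (2 * a))
      = r * (2 * M * ((2 * p + 1) * u)) := by
    field_simp; ring
  rw [hc]
  have hnum : -(r * (2 * M * ((2 * p + 1) * u))) - a ^ 2 + 1 = 2 * p * a ^ 2 := by
    have h2 : a ^ 2 = (1 - 2 * M * (u * r) * (2 * p + 1)) / (2 * p + 1) := by
      field_simp; linarith [ha2]
    rw [h2]; field_simp; ring
  rw [hnum, ← e2]
  field_simp
  ring
end

section
/- For A(r) = 1 − K/r, C(r) = 1, ψ(r) = −2ψ₀√r/(K√(r−K)), 𝒜(ψ) = −(1/8)βψ², 𝒱 = 0, the rr field equation of the real tetrad holds for all r > K > 0: −𝒜(ψ)(2rAA' + A² − C²)/(r²A²) + (1/2)βψ'² = 0. -/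
/-- The rr field equation (real tetrad, torsion-scalar coupling only, V = 0)
holds for the BBMB-type solution A = 1 - K/r, C = 1,
ψ = -2ψ₀√r/(K√(r-K)), 𝒜(ψ) = -(1/8)βψ². -/
theorem stmt_7 (K β ψ₀ : ℝ) (hK : 0 < K)
    (A ψ : ℝ → ℝ) (𝒜 : ℝ → ℝ)
    (hA : ∀ r, A r = 1 - K / r)
    (hψ : ∀ r > K, ψ r = -2 * ψ₀ * Real.sqrt r / (K * Real.sqrt (r - K)))
    (h𝒜 : ∀ s, 𝒜 s = -(1/8) * β * s ^ 2) :
    ∀ r > K,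
      -(𝒜 (ψ r) * (2 * r * A r * deriv A r + (A r) ^ 2 - 1) / (r ^ 2 * (A r) ^ 2))
        + (1/2) * β * (deriv ψ r) ^ 2 = 0 := by
  intro r hr
  have hr0 : 0 < r := hK.trans hr
  have hrK : 0 < r - K := sub_pos.mpr hr
  set sr := Real.sqrt r with hsrdef
  set sk := Real.sqrt (r - K) with hskdef
  have hsr : 0 < sr := Real.sqrt_pos.mpr hr0
  have hsk : 0 < sk := Real.sqrt_pos.mpr hrK
  have hsr2 : sr ^ 2 = r := Real.sq_sqrt hr0.le
  have hsk2 : sk ^ 2 = r - K := Real.sq_sqrt hrK.le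
  have hKeq : K = sr ^ 2 - sk ^ 2 := by rw [hsr2, hsk2]; ring
  -- deriv A
  have hAfun : A = fun x : ℝ => 1 - K / x := funext hA
  have hA' : deriv A r = K / r ^ 2 := by
    have h : HasDerivAt (fun x : ℝ => 1 - K * x⁻¹) (K / r ^ 2) r := by
      have h0 := ((hasDerivAt_inv hr0.ne').const_mul K).const_sub 1
      refine h0.congr_deriv ?_
      ring
    rw [hAfun]
    simp only [div_eq_mul_inv]
    exact h.deriv
  -- deriv ψ
  have hψ' : deriv ψ r = ψ₀ / (sr * sk ^ 3) := by
    have hev : ψ =ᶠ[nhds r] fun x => -2 * ψ₀ * Real.sqrt x / (K * Real.sqrt (x - K)) := by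
      filter_upwards [isOpen_Ioi.mem_nhds (show r ∈ Set.Ioi K from hr)] with x hx
      exact hψ x hx
    rw [hev.deriv_eq]
    have hnum : HasDerivAt (fun x : ℝ => -2 * ψ₀ * Real.sqrt x)
        (-2 * ψ₀ * (1 / (2 * sr))) r :=
      (Real.hasDerivAt_sqrt hr0.ne').const_mul (-2 * ψ₀)
    have hden : HasDerivAt (fun x : ℝ => K * Real.sqrt (x - K))
        (K * (1 / (2 * sk))) r := by
      have hinner : HasDerivAt (fun x : ℝ => x - K) 1 r := (hasDerivAt_id r).sub_const K
      have := (Real.hasDerivAt_sqrt hrK.ne').comp r hinner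
      simpa using this.const_mul K
    have hden0 : K * sk ≠ 0 := by positivity
    have hd := hnum.div hden hden0
    rw [show (fun x => -2 * ψ₀ * Real.sqrt x / (K * Real.sqrt (x - K))) = ((fun x : ℝ => -2 * ψ₀ * Real.sqrt x) / fun x => K * Real.sqrt (x - K)) from rfl, hd.deriv]
    rw [← hsrdef, ← hskdef]
    have hK0 : K ≠ 0 := hK.ne'
    field_simp
    rw [hKeq]
    ring
  rw [hψ', hA', hA r, hψ r hr, h𝒜]
  rw [← hsrdef, ← hskdef]
  have h1 : (1 : ℝ) - K / r ≠ 0 := by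
    rw [sub_ne_zero]
    intro h
    have : K = r := by field_simp at h; linarith
    linarith
  field_simp
  rw [hKeq, ← hsr2]
  ring
end

section
/- Let A(r) = 2 − r/(2K) + √(r(r−4K))/(2K) for r > 4K > 0. Then A satisfies the ODE rA(A−1)A'' + (A−1)²A' − r(A+1)A'² = 0 on (4K, ∞). -/
/-- The explicit metric function A(r) = 2 - r/(2K) + √(r(r-4K))/(2K) solves
r A (A-1) A'' + (A-1)² A' - r (A+1) A'² = 0 on (4K, ∞). -/
theorem stmt_9 (K : ℝ) (hK : 0 < K) (A : ℝ → ℝ)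
    (hA : ∀ r, A r = 2 - r / (2 * K) + Real.sqrt (r * (r - 4 * K)) / (2 * K)) :
    ∀ r : ℝ, r > 4 * K →
      r * A r * (A r - 1) * deriv (deriv A) r
        + (A r - 1) ^ 2 * deriv A r
        - r * (A r + 1) * (deriv A r) ^ 2 = 0 := by
  have hK2 : (2 * K) ≠ 0 := by positivity
  have hpos : ∀ x : ℝ, x > 4 * K → 0 < x * (x - 4 * K) := by
    intro x hx
    have : 0 < x := lt_trans (by positivity) hx
    exact mul_pos this (by linarith)
  have hspos : ∀ x : ℝ, x > 4 * K → 0 < Real.sqrt (x * (x - 4 * K)) := fun x hx =>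
    Real.sqrt_pos.mpr (hpos x hx)
  have hinn : ∀ x : ℝ, HasDerivAt (fun y : ℝ => y * (y - 4 * K)) (2 * x - 4 * K) x := by
    intro x
    have h := (hasDerivAt_id x).mul ((hasDerivAt_id x).sub_const (4 * K))
    simp only [id_eq, one_mul, mul_one] at h
    refine h.congr_deriv (Eq.symm ?_)
    ring
  have key : ∀ x : ℝ, x > 4 * K →
      HasDerivAt A ((-1 + (x - 2 * K) / Real.sqrt (x * (x - 4 * K))) / (2 * K)) x := by
    intro x hx
    have hsq := (Real.hasDerivAt_sqrt (hpos x hx).ne').comp x (hinn x)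
    have h1 : HasDerivAt (fun y : ℝ => 2 - y / (2 * K) + Real.sqrt (y * (y - 4 * K)) / (2 * K))
        ((-1 + (x - 2 * K) / Real.sqrt (x * (x - 4 * K))) / (2 * K)) x := by
      have h2 := ((hasDerivAt_const x (2:ℝ)).sub ((hasDerivAt_id x).div_const (2 * K))).add
        (hsq.div_const (2 * K))
      refine h2.congr_deriv (Eq.symm ?_)
      have hs0 := (hspos x hx).ne'
      field_simp
      ring
    exact h1.congr_of_eventuallyEq (Filter.Eventually.of_forall fun y => hA y)
  set g : ℝ → ℝ := fun x => (-1 + (x - 2 * K) / Real.sqrt (x * (x - 4 * K))) / (2 * K) with hg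
  have hderivA : ∀ x : ℝ, x > 4 * K → deriv A x = g x := fun x hx => (key x hx).deriv
  intro r hr
  have hsr := hspos r hr
  have hs0 : Real.sqrt (r * (r - 4 * K)) ≠ 0 := hsr.ne'
  have hs2 : Real.sqrt (r * (r - 4 * K)) ^ 2 = r * (r - 4 * K) := Real.sq_sqrt (hpos r hr).le
  have hgd : HasDerivAt g (-(2 * K) / (Real.sqrt (r * (r - 4 * K)))^3) r := by
    have hsq := (Real.hasDerivAt_sqrt (hpos r hr).ne').comp r (hinn r)
    have hsq' : HasDerivAt (fun y : ℝ => Real.sqrt (y * (y - 4 * K)))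
        ((r - 2 * K) / Real.sqrt (r * (r - 4 * K))) r := by
      refine hsq.congr_deriv (Eq.symm ?_)
      field_simp
      ring
    have hnum : HasDerivAt (fun y : ℝ => y - 2 * K) 1 r := (hasDerivAt_id r).sub_const (2 * K)
    have hdiv := hnum.div hsq' hs0
    have h3 := ((hasDerivAt_const r (-1:ℝ)).add hdiv).div_const (2 * K)
    refine h3.congr_deriv (Eq.symm ?_)
    rw [zero_add]
    set s := Real.sqrt (r * (r - 4 * K))
    field_simp
    linear_combination (-1) * hs2
  have hopen : {x : ℝ | x > 4 * K} ∈ nhds r := (isOpen_lt continuous_const continuous_id).mem_nhds hr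
  have heq : deriv A =ᶠ[nhds r] g := Filter.eventuallyEq_of_mem hopen hderivA
  have hAA : deriv (deriv A) r = deriv g r := Filter.EventuallyEq.deriv_eq heq
  rw [hAA, hgd.deriv, hA r, hderivA r hr, hg]
  beta_reduce
  set s := Real.sqrt (r * (r - 4 * K))
  field_simp
  linear_combination (-s^3 - 6*K*s^2 + 2*r*s^2 - 12*K^2*s + 6*K*r*s - r^2*s + 4*K^2*r - 8*K^3) * hs2
end

section
/- For K < 0, the function A(r) = 2 − r/(2K) + √(r(r−4K))/(2K) satisfies A(r) > 0 for all r > 0 (i.e., there is no horizon). -/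
/-- For K < 0, A(r) = 2 - r/(2K) + √(r(r-4K))/(2K) never vanishes on (0,∞):
no horizon. -/
theorem stmt_11 (K : ℝ) (hK : K < 0) (A : ℝ → ℝ)
    (hA : ∀ r, A r = 2 - r / (2 * K) + Real.sqrt (r * (r - 4 * K)) / (2 * K)) :
    ∀ r : ℝ, 0 < r → A r > 0 := by
  intro r hr
  rw [hA]
  have h2K : (2 : ℝ) * K < 0 := by linarith
  have key : ∀ s : ℝ, 0 ≤ s → s < r - 4 * K →
      2 - r / (2 * K) + s / (2 * K) > 0 := by
    intro s hs0 hs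
    have hne : (2:ℝ) * K ≠ 0 := h2K.ne
    have heq : 2 - r / (2 * K) + s / (2 * K) = (4 * K - r + s) / (2 * K) := by
      rw [eq_div_iff hne, add_mul, sub_mul, div_mul_cancel₀ _ hne, div_mul_cancel₀ _ hne]
      ring
    rw [heq]
    exact div_pos_of_neg_of_neg (by linarith) h2K
  apply key _ (Real.sqrt_nonneg _)
  rw [Real.sqrt_lt' (by linarith)]
  nlinarith
end
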